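/- arXiv:2305.01748 — 3 statements merged into one kernel-verified Lean document; each statement's English description precedes it below -/
import Mathlib

section
/- Let r ≥ 3 and let G be an r-regular asymmetric simple graph. Then the hypergraph dual of G is an asymmetric r-uniform hypergraph. -/
/-- The adjacency set of a vertex `v`: the set of edges of `G` containing `v`,
viewed as a set of vertices of the hypergraph dual of `G`. -/
def adjSet {V : Type*} (G : SimpleGraph V) (v : V) : Set G.edgeSet :=
  {e : G.edgeSet | v ∈ (e : Sym2 V)}

/-- The edge set of the hypergraph dual of `G`: its vertices are the edges of `G`,
and its edges are the adjacency sets of the vertices of `G`. -/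
def dualEdges {V : Type*} (G : SimpleGraph V) : Set (Set G.edgeSet) :=
  {S | ∃ v : V, S = adjSet G v}

lemma adjSet_ncard {V : Type*} [Fintype V] (G : SimpleGraph V) (r : ℕ)
    (hreg : ∀ v : V, {e ∈ G.edgeSet | v ∈ e}.ncard = r) (v : V) :
    (adjSet G v).ncard = r := by
  have himg : Subtype.val '' (adjSet G v) = {e ∈ G.edgeSet | v ∈ e} := by
    ext e; constructor
    · rintro ⟨⟨e, he⟩, hv, rfl⟩; exact ⟨he, hv⟩
    · rintro ⟨he, hv⟩; exact ⟨⟨e, he⟩, hv, rfl⟩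
  rw [← hreg v, ← himg, Set.ncard_image_of_injective _ Subtype.val_injective]

lemma adj_iff_aux {V : Type*} (G : SimpleGraph V) (a b : V) :
    G.Adj a b ↔ a ≠ b ∧ (adjSet G a ∩ adjSet G b).Nonempty := by
  constructor
  · intro h
    exact ⟨h.ne, ⟨⟨s(a, b), h⟩, Sym2.mem_mk_left a b, Sym2.mem_mk_right a b⟩⟩
  · rintro ⟨hne, e, ha, hb⟩
    have : (e : Sym2 V) = s(a, b) := (Sym2.mem_and_mem_iff hne).mp ⟨ha, hb⟩
    have he := e.prop
    rw [this] at he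
    exact he

theorem dual_of_regular_asymmetric_is_asymmetric {V : Type*} [Fintype V]
    (G : SimpleGraph V) (r : ℕ) (hr : 3 ≤ r)
    (hreg : ∀ v : V, {e ∈ G.edgeSet | v ∈ e}.ncard = r)
    (hasym : ∀ f : V ≃ V, (∀ a b : V, G.Adj a b ↔ G.Adj (f a) (f b)) → f = Equiv.refl V) :
    (∀ S ∈ dualEdges G, S.ncard = r) ∧
    (∀ ψ : G.edgeSet ≃ G.edgeSet,
      (∀ S ∈ dualEdges G, ψ '' S ∈ dualEdges G) → ψ = Equiv.refl G.edgeSet) := by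
  classical
  have hSize : ∀ v : V, (adjSet G v).ncard = r := adjSet_ncard G r hreg
  refine ⟨by rintro S ⟨v, rfl⟩; exact hSize v, ?_⟩
  have hfinSet : ∀ v : V, (adjSet G v).Finite := fun v => Set.toFinite _
  have hinj : Function.Injective (adjSet G) := by
    intro a b hab
    by_contra hne
    have h1 : 1 < (adjSet G a).ncard := by rw [hSize]; omega
    obtain ⟨e₁, e₂, he₁, he₂, hee⟩ := (Set.one_lt_ncard_iff (hfinSet a)).mp h1
    have h₁ : (e₁ : Sym2 V) = s(a, b) :=
      (Sym2.mem_and_mem_iff hne).mp ⟨he₁, show e₁ ∈ adjSet G b from hab ▸ he₁⟩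
    have h₂ : (e₂ : Sym2 V) = s(a, b) :=
      (Sym2.mem_and_mem_iff hne).mp ⟨he₂, show e₂ ∈ adjSet G b from hab ▸ he₂⟩
    exact hee (Subtype.ext (h₁.trans h₂.symm))
  intro ψ hψ
  have hex : ∀ v : V, ∃ w : V, ψ '' adjSet G v = adjSet G w := by
    intro v
    obtain ⟨w, hw⟩ := hψ (adjSet G v) ⟨v, rfl⟩
    exact ⟨w, hw⟩
  choose f hf using hex
  have hfinj : Function.Injective f := by
    intro a b h
    apply hinj
    apply Set.image_injective.mpr ψ.injective
    rw [hf, hf, h]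
  have hfbij : Function.Bijective f := Finite.injective_iff_bijective.mp hfinj
  have hadj : ∀ a b : V, G.Adj a b ↔ G.Adj (f a) (f b) := by
    intro a b
    rw [adj_iff_aux, adj_iff_aux]
    constructor
    · rintro ⟨hne, e, ha, hb⟩
      refine ⟨fun h => hne (hfinj h), ψ e, ?_, ?_⟩
      · rw [← hf a]; exact ⟨e, ha, rfl⟩
      · rw [← hf b]; exact ⟨e, hb, rfl⟩
    · rintro ⟨hne, e, ha, hb⟩
      refine ⟨fun h => hne (by rw [h]), ?_⟩
      rw [← hf a] at ha; rw [← hf b] at hb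
      obtain ⟨e₁, he₁, rfl⟩ := ha
      obtain ⟨e₂, he₂, he⟩ := hb
      have : e₂ = e₁ := ψ.injective he
      exact ⟨e₁, he₁, this ▸ he₂⟩
  have hg := hasym (Equiv.ofBijective f hfbij) hadj
  have hfv : ∀ v : V, f v = v := fun v => congrFun (congrArg Equiv.toFun hg) v
  have hfix : ∀ v : V, ψ '' adjSet G v = adjSet G v := by
    intro v; rw [hf v, hfv v]
  apply Equiv.ext
  rintro ⟨e, he⟩
  induction e using Sym2.ind with
  | _ a b =>
    have hadjab : G.Adj a b := G.mem_edgeSet.mp he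
    have hmem_a : ψ ⟨s(a, b), he⟩ ∈ adjSet G a := by
      rw [← hfix a]
      exact ⟨⟨s(a, b), he⟩, Sym2.mem_mk_left a b, rfl⟩
    have hmem_b : ψ ⟨s(a, b), he⟩ ∈ adjSet G b := by
      rw [← hfix b]
      exact ⟨⟨s(a, b), he⟩, Sym2.mem_mk_right a b, rfl⟩
    have : ((ψ ⟨s(a, b), he⟩ : G.edgeSet) : Sym2 V) = s(a, b) :=
      (Sym2.mem_and_mem_iff hadjab.ne).mp ⟨hmem_a, hmem_b⟩
    exact Subtype.ext this
end

section
/- For every k ≥ 3, there exist infinitely many pairwise non-isomorphic 2-regular asymmetric k-uniform hypergraphs, assuming that for every k ≥ 3 there exist infinitely many pairwise non-isomorphic k-regular asymmetric simple graphs. -/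
open Finset

lemma sym2_eq_of_mem {V : Type*} {e : Sym2 V} {a b : V} (hab : a ≠ b)
    (ha : a ∈ e) (hb : b ∈ e) : e = s(a, b) := by
  induction e with
  | _ x y =>
    rw [Sym2.mem_iff] at ha hb
    rcases ha with rfl | rfl <;> rcases hb with rfl | rfl
    · exact absurd rfl hab
    · rfl
    · exact Sym2.eq_swap
    · exact absurd rfl hab

lemma sym2_exists {V : Type*} (e : Sym2 V) : ∃ a b, e = s(a, b) := by
  induction e with
  | _ x y => exact ⟨x, y, rfl⟩

lemma dual_exists (k n : ℕ) (hk : 3 ≤ k) (G : SimpleGraph (Fin n))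
    (hreg : ∀ v, {w | G.Adj v w}.ncard = k)
    (hasym : ∀ f : Fin n ≃ Fin n,
      (∀ a b, G.Adj a b ↔ G.Adj (f a) (f b)) → f = Equiv.refl _) :
    ∃ (m : ℕ) (E : Finset (Finset (Fin m))),
      2 * m = n * k ∧
      (∀ e ∈ E, e.card = k) ∧
      (∀ x : Fin m, (E.filter (fun e => x ∈ e)).card = 2) ∧
      (∀ φ : Fin m ≃ Fin m, (∀ e ∈ E, e.image φ ∈ E) → φ = Equiv.refl _) := by
  classical
  haveI : Fintype G.edgeSet := Fintype.ofFinite _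
  set m := G.edgeFinset.card with hm
  set ι : {e // e ∈ G.edgeFinset} ≃ Fin m := G.edgeFinset.equivFin with hι
  have hdeg : ∀ v, G.degree v = k := by
    intro v
    rw [← hreg v]
    have : {w | G.Adj v w} = ↑(G.neighborFinset v) := by
      ext w; simp [SimpleGraph.mem_neighborFinset]
    rw [this, Set.ncard_coe_finset, SimpleGraph.degree]
  set A : Fin n → Finset (Fin m) :=
    fun v => univ.filter (fun x => v ∈ (ι.symm x : Sym2 (Fin n))) with hA
  have memA : ∀ v x, x ∈ A v ↔ v ∈ (ι.symm x : Sym2 (Fin n)) := by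
    intro v x; simp [hA]
  have cardA : ∀ v, (A v).card = k := by
    intro v
    rw [← hdeg v, ← SimpleGraph.card_incidenceFinset_eq_degree]
    refine Finset.card_bij' (fun x _ => (ι.symm x : Sym2 (Fin n)))
      (fun e he => ι ⟨e, ?_⟩) ?_ ?_ ?_ ?_
    · rw [SimpleGraph.mem_incidenceFinset, SimpleGraph.incidenceSet] at he
      exact SimpleGraph.mem_edgeFinset.2 he.1
    · intro x hx
      rw [memA] at hx
      rw [SimpleGraph.mem_incidenceFinset]
      exact ⟨SimpleGraph.mem_edgeFinset.1 (ι.symm x).2, hx⟩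
    · intro e he
      rw [memA]
      rw [SimpleGraph.mem_incidenceFinset] at he
      simpa using he.2
    · intro x hx
      exact (Equiv.apply_eq_iff_eq_symm_apply ι).2 (Subtype.ext rfl)
    · intro e he; simp
  have adjA : ∀ a b, G.Adj a b ↔ (a ≠ b ∧ ((A a) ∩ (A b)).Nonempty) := by
    intro a b
    constructor
    · intro h
      refine ⟨h.ne, ⟨ι ⟨s(a,b), SimpleGraph.mem_edgeFinset.2 h⟩, ?_⟩⟩
      rw [Finset.mem_inter, memA, memA]
      simp
    · rintro ⟨hab, x, hx⟩
      rw [Finset.mem_inter, memA, memA] at hx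
      have he := SimpleGraph.mem_edgeFinset.1 (ι.symm x).2
      have h2 : ((ι.symm x : Sym2 (Fin n))) = s(a,b) := sym2_eq_of_mem hab hx.1 hx.2
      rw [h2] at he
      exact he
  have injA : Function.Injective A := by
    intro v w hvw
    by_contra hne
    have hnonempty : (A v ∩ A w).Nonempty := by
      rw [hvw, Finset.inter_self, ← Finset.card_pos, cardA]; omega
    have hadj : G.Adj v w := (adjA v w).2 ⟨hne, hnonempty⟩
    set x0 := ι ⟨s(v,w), SimpleGraph.mem_edgeFinset.2 hadj⟩ with hx0
    have hsub : A v ⊆ {x0} := by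
      intro x hx
      have hxw : x ∈ A w := hvw ▸ hx
      rw [memA] at hx hxw
      have : ι.symm x = ⟨s(v,w), SimpleGraph.mem_edgeFinset.2 hadj⟩ :=
        Subtype.ext (sym2_eq_of_mem hne hx hxw)
      rw [Finset.mem_singleton, hx0, ← this]
      simp
    have := Finset.card_le_card hsub
    rw [cardA, Finset.card_singleton] at this
    omega
  set E : Finset (Finset (Fin m)) := (univ : Finset (Fin n)).image A with hE
  refine ⟨m, E, ?_, ?_, ?_, ?_⟩
  · have h := G.sum_degrees_eq_twice_card_edges
    simp only [hdeg] at h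
    rw [Finset.sum_const, Finset.card_univ, Fintype.card_fin, smul_eq_mul] at h
    rw [hm, h]
    congr!
  · intro e he
    rw [hE, Finset.mem_image] at he
    obtain ⟨v, -, rfl⟩ := he
    exact cardA v
  · intro x
    have himg : E.filter (fun e => x ∈ e) = (univ.filter (fun v => x ∈ A v)).image A := by
      rw [hE, Finset.filter_image]
    rw [himg, Finset.card_image_of_injective _ injA]
    obtain ⟨a, b, hab⟩ := sym2_exists (ι.symm x : Sym2 (Fin n))
    have hane : a ≠ b := by
      intro h
      refine G.not_isDiag_of_mem_edgeSet (SimpleGraph.mem_edgeFinset.1 (ι.symm x).2) ?_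
      rw [hab, h]
      exact Sym2.mk_isDiag_iff.2 rfl
    have : univ.filter (fun v => x ∈ A v) = {a, b} := by
      ext v
      simp only [Finset.mem_filter, Finset.mem_univ, true_and, memA, hab,
        Sym2.mem_iff, Finset.mem_insert, Finset.mem_singleton]
    rw [this, Finset.card_insert_of_notMem (by simpa using hane), Finset.card_singleton]
  · intro φ hφ
    have hσ : ∀ v, ∃ w, A w = (A v).image φ := by
      intro v
      have h := hφ (A v) (by rw [hE]; exact Finset.mem_image_of_mem _ (Finset.mem_univ v))
      rw [hE, Finset.mem_image] at h
      obtain ⟨w, -, hw⟩ := h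
      exact ⟨w, hw⟩
    choose σ hσ using hσ
    have himginj : ∀ s t : Finset (Fin m), s.image φ = t.image φ → s = t := by
      intro s t hst
      have h1 : ∀ u : Finset (Fin m), (u.image φ).image φ.symm = u := by
        intro u; rw [Finset.image_image]; simp
      rw [← h1 s, ← h1 t, hst]
    have hσinj : Function.Injective σ := by
      intro v v' h
      apply injA
      apply himginj
      rw [← hσ v, ← hσ v', h]
    have hσbij : Function.Bijective σ := Finite.injective_iff_bijective.mp hσinj
    set f := Equiv.ofBijective σ hσbij with hf
    have hfeq : f = Equiv.refl _ := by
      apply hasym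
      intro a b
      rw [adjA, adjA]
      have h1 : A (f a) ∩ A (f b) = (A a ∩ A b).image φ := by
        show A (σ a) ∩ A (σ b) = _
        rw [hσ a, hσ b, ← Finset.image_inter _ _ φ.injective]
      constructor
      · rintro ⟨hne, hx⟩
        refine ⟨fun h => hne (f.injective h), ?_⟩
        rw [h1]
        exact hx.image φ
      · rintro ⟨hne, hx⟩
        rw [h1] at hx
        exact ⟨fun h => hne (by rw [h]), Finset.image_nonempty.1 hx⟩
    have hfix : ∀ v, (A v).image φ = A v := by
      intro v
      rw [← hσ v]
      have : σ v = f v := rfl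
      rw [this, hfeq]
      rfl
    apply Equiv.ext
    intro x
    show φ x = x
    obtain ⟨a, b, hab⟩ := sym2_exists (ι.symm x : Sym2 (Fin n))
    have hane : a ≠ b := by
      intro h
      refine G.not_isDiag_of_mem_edgeSet (SimpleGraph.mem_edgeFinset.1 (ι.symm x).2) ?_
      rw [hab, h]
      exact Sym2.mk_isDiag_iff.2 rfl
    have hxa : x ∈ A a := (memA _ _).2 (by rw [hab]; simp)
    have hxb : x ∈ A b := (memA _ _).2 (by rw [hab]; simp)
    have h1 : φ x ∈ A a := by rw [← hfix a]; exact Finset.mem_image_of_mem _ hxa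
    have h2 : φ x ∈ A b := by rw [← hfix b]; exact Finset.mem_image_of_mem _ hxb
    have heq : ι.symm (φ x) = ι.symm x := by
      apply Subtype.ext
      rw [sym2_eq_of_mem hane ((memA _ _).1 h1) ((memA _ _).1 h2), hab]
    have := congrArg ι heq
    simpa using this


/-- Two hypergraphs (given by edge sets on `Fin m` and `Fin m'`) are isomorphic if some
vertex bijection maps the edges of one bijectively onto the edges of the other. -/
def HypIso (m m' : ℕ) (E : Finset (Finset (Fin m))) (E' : Finset (Finset (Fin m'))) : Prop :=
  ∃ φ : Fin m ≃ Fin m', E.image (fun e => e.image φ) = E'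

theorem infinitely_many_two_regular_asymmetric_hypergraphs (k : ℕ) (hk : 3 ≤ k)
    (izbicki : ∀ r : ℕ, 3 ≤ r → ∃ Gf : ℕ → (n : ℕ) × SimpleGraph (Fin n),
      (∀ i : ℕ,
        (∀ v, {w | (Gf i).2.Adj v w}.ncard = r) ∧
        (∀ f : Fin (Gf i).1 ≃ Fin (Gf i).1,
          (∀ a b, (Gf i).2.Adj a b ↔ (Gf i).2.Adj (f a) (f b)) → f = Equiv.refl _)) ∧
      (∀ i j : ℕ, i ≠ j → ¬Nonempty ((Gf i).2 ≃g (Gf j).2))) :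
    ∃ Hf : ℕ → (m : ℕ) × Finset (Finset (Fin m)),
      (∀ i : ℕ,
        (∀ e ∈ (Hf i).2, e.card = k) ∧
        (∀ v : Fin (Hf i).1, ((Hf i).2.filter (fun e => v ∈ e)).card = 2) ∧
        (∀ φ : Fin (Hf i).1 ≃ Fin (Hf i).1,
          (∀ e ∈ (Hf i).2, e.image φ ∈ (Hf i).2) → φ = Equiv.refl _)) ∧
      (∀ i j : ℕ, i ≠ j → ¬HypIso (Hf i).1 (Hf j).1 (Hf i).2 (Hf j).2) := by
  classical
  obtain ⟨Gf, hprop, hnoniso⟩ := izbicki k hk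
  -- pairwise distinct
  have hdist : ∀ i j : ℕ, i ≠ j → Gf i ≠ Gf j := by
    intro i j hij heq
    exact hnoniso i j hij (by rw [heq]; exact ⟨RelIso.refl _⟩)
  -- vertex counts are unbounded
  have hub : ∀ N : ℕ, ∃ i, N < (Gf i).1 := by
    intro N
    by_contra hcon
    push_neg at hcon
    set F : ℕ → Σ n : Fin (N + 1), SimpleGraph (Fin n) :=
      fun i => ⟨⟨(Gf i).1, by have := hcon i; omega⟩, (Gf i).2⟩ with hF
    obtain ⟨i, j, hij, hFij⟩ := Finite.exists_ne_map_eq_of_infinite F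
    apply hdist i j hij
    rw [hF] at hFij
    simp only at hFij
    obtain ⟨h1, h2⟩ := Sigma.mk.inj_iff.mp hFij
    exact Sigma.ext (by simpa using congrArg Fin.val h1) h2
  choose pick hpick using hub
  -- strictly increasing subsequence of vertex counts
  set idx : ℕ → ℕ := fun i => Nat.rec (pick 0) (fun _ prev => pick ((Gf prev).1)) i with hidx
  have hgmono : StrictMono (fun i => (Gf (idx i)).1) := by
    apply strictMono_nat_of_lt_succ
    intro i
    exact hpick ((Gf (idx i)).1)
  choose m E h2m h1 h2 h3 using fun i =>
    dual_exists k (Gf (idx i)).1 hk (Gf (idx i)).2 (hprop (idx i)).1 (hprop (idx i)).2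
  refine ⟨fun i => ⟨m i, E i⟩, fun i => ⟨h1 i, h2 i, h3 i⟩, ?_⟩
  intro i j hij hiso
  obtain ⟨φ, -⟩ := hiso
  have hmeq : m i = m j := Fin.equiv_iff_eq.1 ⟨φ⟩
  have hne : (Gf (idx i)).1 ≠ (Gf (idx j)).1 := fun h => hij (hgmono.injective h)
  have e1 := h2m i
  have e2 := h2m j
  rw [hmeq, e2] at e1
  have hk0 : 0 < k := by omega
  exact hne (Nat.eq_of_mul_eq_mul_right hk0 e1).symm
end

section
/- Let k ≥ 3 and t ≥ 2, and let φ be an automorphism of the Jiang–Nešetřil hypergraph G_{k,t}. Then there exists j ∈ [tk] such that either φ(E_i) = E_{i+j−1} for all i ∈ [tk], or φ(E_i) = E_{j−i+1} for all i ∈ [tk], where indices are taken modulo tk. -/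
/-- Vertex type of the Jiang–Nešetřil hypergraph `G_{k,t}` with `n = t*k`:
vertices `u_i`, `v_i` (for `i` modulo `n`) and `w_{i,j}` (for `j ∈ [k-3]`). -/
abbrev JNVert (n k : ℕ) := ZMod n ⊕ ZMod n ⊕ (ZMod n × Fin (k - 3))

def JNu (n k : ℕ) (i : ZMod n) : JNVert n k := Sum.inl i
def JNv (n k : ℕ) (i : ZMod n) : JNVert n k := Sum.inr (Sum.inl i)
def JNw (n k : ℕ) (i : ZMod n) (j : Fin (k - 3)) : JNVert n k := Sum.inr (Sum.inr (i, j))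

/-- The L-edge `E_i = {v_i, u_i, v_{i+1}, w_{i,1}, …, w_{i,k-3}}`. -/
def JNL (n k : ℕ) [NeZero n] (i : ZMod n) : Finset (JNVert n k) :=
  {JNv n k i, JNu n k i, JNv n k (i + 1)} ∪ Finset.univ.image (JNw n k i)

/-- The cyclic edge `E_{i,j} = {w_{i,j}, …, w_{i+k-1,j}}`. -/
def JNC (n k : ℕ) (i : ZMod n) (j : Fin (k - 3)) : Finset (JNVert n k) :=
  (Finset.range k).image (fun m : ℕ => JNw n k (i + (m : ZMod n)) j)

/-- The edge set of `G_{k,t}`: all L-edges together with the cyclic edges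
`E_{i,j}` for `j ∈ [k-3]` and `i = j + s*k`, `s ∈ [t]`. -/
def JNedges (t k : ℕ) [NeZero (t * k)] : Finset (Finset (JNVert (t * k) k)) :=
  Finset.univ.image (JNL (t * k) k) ∪
  Finset.univ.image (fun p : Fin t × Fin (k - 3) =>
    JNC (t * k) k ((((p.2 : ℕ) + 1) + (p.1 : ℕ) * k : ℕ) : ZMod (t * k)) p.2)

lemma mem_JNL {n k : ℕ} [NeZero n] {x : JNVert n k} {i : ZMod n} :
    x ∈ JNL n k i ↔ x = JNv n k i ∨ x = JNu n k i ∨ x = JNv n k (i+1) ∨ ∃ j, x = JNw n k i j := by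
  simp [JNL, eq_comm]

lemma mem_JNC {n k : ℕ} {x : JNVert n k} {i : ZMod n} {j : Fin (k-3)} :
    x ∈ JNC n k i j ↔ ∃ m < k, x = JNw n k (i + (m:ZMod n)) j := by
  simp [JNC, eq_comm]

lemma u_mem_JNL {n k : ℕ} [NeZero n] (a : ZMod n) : JNu n k a ∈ JNL n k a := by
  rw [mem_JNL]; tauto

lemma u_notin_JNC {n k : ℕ} (a i : ZMod n) (j : Fin (k-3)) : JNu n k a ∉ JNC n k i j := by
  rw [mem_JNC]; simp [JNu, JNw]

lemma JNL_inj {n k : ℕ} [NeZero n] {a b : ZMod n} (h : JNL n k a = JNL n k b) : a = b := by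
  have := u_mem_JNL (n := n) (k := k) a
  rw [h, mem_JNL] at this
  rcases this with h'|h'|h'|⟨j,h'⟩ <;> simp [JNu, JNv, JNw] at h' <;> tauto

lemma JNL_mem_edges (t k : ℕ) [NeZero (t*k)] (i : ZMod (t*k)) : JNL (t*k) k i ∈ JNedges t k := by
  rw [JNedges, Finset.mem_union]
  exact Or.inl (Finset.mem_image.2 ⟨i, Finset.mem_univ _, rfl⟩)

lemma eq_JNL_of_u_mem {t k : ℕ} [NeZero (t*k)] {e : Finset (JNVert (t*k) k)} {a : ZMod (t*k)}
    (he : e ∈ JNedges t k) (ha : JNu (t*k) k a ∈ e) : e = JNL (t*k) k a := by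
  rw [JNedges, Finset.mem_union] at he
  rcases he with he | he
  · obtain ⟨i, -, rfl⟩ := Finset.mem_image.1 he
    rw [mem_JNL] at ha
    rcases ha with h'|h'|h'|⟨j,h'⟩ <;> simp [JNu, JNv, JNw] at h'
    subst h'; rfl
  · obtain ⟨p, -, rfl⟩ := Finset.mem_image.1 he
    exact absurd ha (u_notin_JNC _ _ _)

lemma JNL_sep {n k : ℕ} [NeZero n] {a b : ZMod n} (h : ((JNL n k a) ∩ (JNL n k b)).Nonempty) :
    a = b ∨ a = b + 1 ∨ b = a + 1 := by
  obtain ⟨x, hx⟩ := h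
  rw [Finset.mem_inter] at hx
  obtain ⟨h1, h2⟩ := hx
  rw [mem_JNL] at h1 h2
  rcases h1 with h|h|h|⟨j,h⟩ <;> subst h <;>
    simp [JNu, JNv, JNw, Prod.ext_iff, eq_comm] at h2 <;>
    rcases h2 with h|h <;> tauto

lemma JNL_adj {n k : ℕ} [NeZero n] (a : ZMod n) : ((JNL n k a) ∩ (JNL n k (a+1))).Nonempty := by
  refine ⟨JNv n k (a+1), Finset.mem_inter.2 ⟨?_, ?_⟩⟩ <;> rw [mem_JNL] <;> tauto

lemma w_in_cyclic (t k : ℕ) [NeZero (t*k)] (hk : 3 ≤ k) (i : ZMod (t*k)) (j : Fin (k-3)) :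
    ∃ c ∈ JNedges t k, JNw (t*k) k i j ∈ c ∧ ∀ a, JNu (t*k) k a ∉ c := by
  have hn : 0 < t * k := Nat.pos_of_ne_zero (NeZero.ne _)
  have hkpos : 0 < k := by omega
  set b : ℕ := (i - ((j : ℕ) + 1 : ℕ)).val with hb
  have hblt : b < t * k := ZMod.val_lt _
  have hs : b / k < t := Nat.div_lt_of_lt_mul (by rw [Nat.mul_comm]; omega)
  refine ⟨JNC (t*k) k ((((j : ℕ) + 1) + (b / k) * k : ℕ) : ZMod (t*k)) j, ?_, ?_, ?_⟩
  · rw [JNedges, Finset.mem_union]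
    refine Or.inr (Finset.mem_image.2 ⟨(⟨b / k, hs⟩, j), Finset.mem_univ _, rfl⟩)
  · rw [mem_JNC]
    have hcast : ((b:ℕ) : ZMod (t*k)) = i - (((j:ℕ)+1 : ℕ) : ZMod (t*k)) := by
      rw [hb, ZMod.natCast_val, ZMod.cast_id]
    have h1 : b / k * k + b % k = b := by rw [Nat.mul_comm]; exact Nat.div_add_mod b k
    have hidx : ((((j : ℕ) + 1) + (b / k) * k : ℕ) : ZMod (t*k)) + ((b % k : ℕ) : ZMod (t*k)) = i := by
      rw [← Nat.cast_add, show (j:ℕ)+1 + b/k*k + b%k = ((j:ℕ)+1) + b from by omega,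
        Nat.cast_add, hcast]
      ring
    exact ⟨b % k, Nat.mod_lt _ hkpos, by rw [hidx]⟩
  · intro a; exact u_notin_JNC _ _ _

theorem automorphism_is_rotation_or_reflection_on_L_edges (k t : ℕ) (hk : 3 ≤ k) (ht : 2 ≤ t)
    [NeZero (t * k)]
    (φ : JNVert (t * k) k ≃ JNVert (t * k) k)
    (hφ : ∀ e ∈ JNedges t k, e.image φ ∈ JNedges t k) :
    ∃ j : ZMod (t * k),
      (∀ i : ZMod (t * k), (JNL (t * k) k i).image φ = JNL (t * k) k (i + j - 1)) ∨
      (∀ i : ZMod (t * k), (JNL (t * k) k i).image φ = JNL (t * k) k (j - i + 1)) := by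
  have hn6 : 6 ≤ t * k := le_trans (by norm_num) (Nat.mul_le_mul ht hk)
  have hone : (1 : ZMod (t*k)) ≠ 0 := by
    intro h
    have : (t*k) ∣ 1 := (CharP.cast_eq_zero_iff (ZMod (t*k)) (t*k) 1).1 (by exact_mod_cast h)
    have := Nat.le_of_dvd one_pos this
    omega
  have htwo : (2 : ZMod (t*k)) ≠ 0 := by
    intro h
    have : (t*k) ∣ 2 := (CharP.cast_eq_zero_iff (ZMod (t*k)) (t*k) 2).1 (by exact_mod_cast h)
    have := Nat.le_of_dvd two_pos this
    omega
  have hval : ∀ a : ZMod (t*k), ((a.val : ℕ) : ZMod (t*k)) = a := by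
    intro a; rw [ZMod.natCast_val, ZMod.cast_id]
  -- φ induces a bijection on edges
  have hinjE : Set.InjOn (fun e => Finset.image φ e) (JNedges t k) :=
    fun e _ e' _ h => Finset.image_injective φ.injective h
  have himg : (JNedges t k).image (fun e => e.image φ) = JNedges t k := by
    apply Finset.eq_of_subset_of_card_le
    · intro e' he'
      obtain ⟨e, he, rfl⟩ := Finset.mem_image.1 he'
      exact hφ e he
    · rw [Finset.card_image_of_injOn hinjE]
  have hsurj : ∀ e' ∈ JNedges t k, ∃ e ∈ JNedges t k, e.image φ = e' := by
    intro e' he'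
    rw [← himg] at he'
    obtain ⟨e, he, h⟩ := Finset.mem_image.1 he'
    exact ⟨e, he, h⟩
  -- degree is preserved
  have hdeg : ∀ x : JNVert (t*k) k, ((JNedges t k).filter (fun e => φ x ∈ e)).card
      = ((JNedges t k).filter (fun e => x ∈ e)).card := by
    intro x
    refine (Finset.card_bij (fun e _ => e.image φ) ?_ ?_ ?_).symm
    · intro e he
      rw [Finset.mem_filter] at he ⊢
      exact ⟨hφ e he.1, Finset.mem_image_of_mem φ he.2⟩
    · intro e he e' he' h
      exact Finset.image_injective φ.injective h
    · intro e' he'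
      rw [Finset.mem_filter] at he'
      obtain ⟨e, he, rfl⟩ := hsurj e' he'.1
      refine ⟨e, Finset.mem_filter.2 ⟨he, ?_⟩, rfl⟩
      obtain ⟨y, hy, hyx⟩ := Finset.mem_image.1 he'.2
      rwa [← φ.injective hyx]
  have hu_filter : ∀ a, (JNedges t k).filter (fun e => JNu (t*k) k a ∈ e)
      = {JNL (t*k) k a} := by
    intro a
    ext e
    simp only [Finset.mem_filter, Finset.mem_singleton]
    constructor
    · rintro ⟨he, ha⟩; exact eq_JNL_of_u_mem he ha
    · rintro rfl; exact ⟨JNL_mem_edges t k a, u_mem_JNL a⟩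
  have hdeg_u : ∀ a, ((JNedges t k).filter (fun e => JNu (t*k) k a ∈ e)).card = 1 := by
    intro a; rw [hu_filter a]; exact Finset.card_singleton _
  have hdeg_v : ∀ a, 2 ≤ ((JNedges t k).filter (fun e => JNv (t*k) k a ∈ e)).card := by
    intro a
    have hne : JNL (t*k) k (a-1) ≠ JNL (t*k) k a := by
      intro h
      have := JNL_inj h
      apply hone
      linear_combination -this
    have hsub : ({JNL (t*k) k (a-1), JNL (t*k) k a} : Finset _)
        ⊆ (JNedges t k).filter (fun e => JNv (t*k) k a ∈ e) := by
      intro e he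
      rw [Finset.mem_insert, Finset.mem_singleton] at he
      rw [Finset.mem_filter]
      rcases he with rfl | rfl
      · refine ⟨JNL_mem_edges t k _, ?_⟩
        rw [mem_JNL]
        right; right; left; rw [sub_add_cancel]
      · refine ⟨JNL_mem_edges t k _, ?_⟩
        rw [mem_JNL]; tauto
    calc 2 = ({JNL (t*k) k (a-1), JNL (t*k) k a} : Finset _).card :=
            (Finset.card_pair hne).symm
      _ ≤ _ := Finset.card_le_card hsub
  have hdeg_w : ∀ (i : ZMod (t*k)) (j : Fin (k-3)),
      2 ≤ ((JNedges t k).filter (fun e => JNw (t*k) k i j ∈ e)).card := by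
    intro i j
    obtain ⟨c, hc, hwc, huc⟩ := w_in_cyclic t k hk i j
    have hne : JNL (t*k) k i ≠ c := by
      intro h
      exact huc i (h ▸ u_mem_JNL i)
    have hsub : ({JNL (t*k) k i, c} : Finset _)
        ⊆ (JNedges t k).filter (fun e => JNw (t*k) k i j ∈ e) := by
      intro e he
      rw [Finset.mem_insert, Finset.mem_singleton] at he
      rw [Finset.mem_filter]
      rcases he with rfl | rfl
      · refine ⟨JNL_mem_edges t k _, ?_⟩
        rw [mem_JNL]
        exact Or.inr (Or.inr (Or.inr ⟨j, rfl⟩))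
      · exact ⟨hc, hwc⟩
    calc 2 = ({JNL (t*k) k i, c} : Finset _).card := (Finset.card_pair hne).symm
      _ ≤ _ := Finset.card_le_card hsub
  -- φ maps u-vertices to u-vertices
  have hφu : ∀ a, ∃ b, φ (JNu (t*k) k a) = JNu (t*k) k b := by
    intro a
    have h1 : ((JNedges t k).filter (fun e => φ (JNu (t*k) k a) ∈ e)).card = 1 := by
      rw [hdeg, hdeg_u]
    rcases hx : φ (JNu (t*k) k a) with b | b | ⟨b, j⟩
    · exact ⟨b, rfl⟩
    · exfalso
      have := hdeg_v b
      rw [hx] at h1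
      rw [show (Sum.inr (Sum.inl b) : JNVert (t*k) k) = JNv (t*k) k b from rfl] at h1
      omega
    · exfalso
      have := hdeg_w b j
      rw [hx] at h1
      rw [show (Sum.inr (Sum.inr (b, j)) : JNVert (t*k) k) = JNw (t*k) k b j from rfl] at h1
      omega
  choose π hπ using hφu
  have hπL : ∀ a, (JNL (t*k) k a).image φ = JNL (t*k) k (π a) := by
    intro a
    apply eq_JNL_of_u_mem (hφ _ (JNL_mem_edges t k a))
    rw [← hπ a]
    exact Finset.mem_image_of_mem φ (u_mem_JNL a)
  have hπinj : Function.Injective π := by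
    intro a b h
    have : (JNL (t*k) k a).image φ = (JNL (t*k) k b).image φ := by
      rw [hπL, hπL, h]
    exact JNL_inj (Finset.image_injective φ.injective this)
  have hstep : ∀ a, π (a+1) = π a + 1 ∨ π a = π (a+1) + 1 := by
    intro a
    have hno : ((JNL (t*k) k (π a)) ∩ (JNL (t*k) k (π (a+1)))).Nonempty := by
      have := (JNL_adj (n := t*k) (k := k) a).image φ
      rwa [Finset.image_inter _ _ φ.injective, hπL, hπL] at this
    rcases JNL_sep hno with h | h | h
    · exfalso
      have := hπinj h
      exact hone (by linear_combination -this)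
    · exact Or.inr h
    · exact Or.inl h
  have hstepconst : ∀ a, π (a+1+1) - π (a+1) = π (a+1) - π a := by
    intro a
    rcases hstep a with h1 | h1 <;> rcases hstep (a+1) with h2 | h2
    · linear_combination h2 - h1
    · exfalso
      have : π (a+1+1) = π a := by linear_combination h1 - h2
      have := hπinj this
      exact htwo (by linear_combination this)
    · exfalso
      have : π (a+1+1) = π a := by linear_combination h2 - h1
      have := hπinj this
      exact htwo (by linear_combination this)
    · linear_combination h1 - h2
  set d : ZMod (t*k) := π 1 - π 0 with hd
  have hconstN : ∀ m : ℕ, π ((m : ZMod (t*k)) + 1) - π (m : ZMod (t*k)) = d := by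
    intro m
    induction m with
    | zero => simp [hd]
    | succ m ih =>
      push_cast
      rw [hstepconst (m : ZMod (t*k))]
      exact ih
  have hconst : ∀ a : ZMod (t*k), π (a + 1) - π a = d := by
    intro a
    have := hconstN a.val
    rwa [hval a] at this
  have hlin : ∀ a : ZMod (t*k), π a = π 0 + a * d := by
    have hN : ∀ m : ℕ, π (m : ZMod (t*k)) = π 0 + (m : ZMod (t*k)) * d := by
      intro m
      induction m with
      | zero => simp
      | succ m ih =>
        push_cast
        have := hconst (m : ZMod (t*k))
        linear_combination ih + this
    intro a
    have := hN a.val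
    rwa [hval a] at this
  have hd1 : d = 1 ∨ d = -1 := by
    rcases hstep 0 with h | h <;> rw [zero_add] at h
    · left; rw [hd]; linear_combination h
    · right; rw [hd]; linear_combination -h
  rcases hd1 with h | h
  · refine ⟨π 0 + 1, Or.inl fun i => ?_⟩
    rw [hπL i]
    have hidx : π i = i + (π 0 + 1) - 1 := by
      have := hlin i; rw [h] at this; linear_combination this
    rw [hidx]
  · refine ⟨π 0 - 1, Or.inr fun i => ?_⟩
    rw [hπL i]
    have hidx : π i = (π 0 - 1) - i + 1 := by
      have := hlin i; rw [h] at this; linear_combination this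
    rw [hidx]
end
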